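/- arXiv:2102.11234 — 3 statements merged into one kernel-verified Lean document; each statement's English description precedes it below -/
import Mathlib

section
/- Let d ≥ 1 and let α = (α_1, …, α_d) ∈ ℝ^d have at least one irrational coordinate, and fix 1 ≤ q ≤ ∞. For all n ≥ 2 and k ≥ 1 such that h_1(n+k) = h_1(n), one has h_{1+k}(n+k) = h_1(n). -/
open scoped BigOperators ENNReal NNReal

/-- Distance from a real number to the nearest integer (the torus norm on ℝ/ℤ). -/
noncomputable def nint (t : ℝ) : ℝ := |t - round t|

/-- The `L_q` distance (for `1 ≤ q ≤ ∞`) between two points of the torus `ℝ^d/ℤ^d`,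
computed on representatives in `ℝ^d`. -/
noncomputable def lqDist (q : ℝ≥0∞) {d : ℕ} (x y : Fin d → ℝ) : ℝ :=
  if q = ⊤ then ⨆ i, nint (x i - y i)
  else (∑ i, nint (x i - y i) ^ q.toReal) ^ (1 / q.toReal)

/-- The `n`-th point of the `d`-dimensional Kronecker sequence `z_n = nα + ℤ^d`
(as a representative in `ℝ^d`). -/
noncomputable def kron {d : ℕ} (α : Fin d → ℝ) (n : ℕ) : Fin d → ℝ :=
  fun c => (n : ℝ) * α c

/-- `L_q`-distance on the torus between the `i`-th and `j`-th points of the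
Kronecker sequence of `α`. -/
noncomputable def kronDist (q : ℝ≥0∞) {d : ℕ} (α : Fin d → ℝ) (i j : ℕ) : ℝ :=
  lqDist q (kron α i) (kron α j)

/-- The index `j ∈ {1, …, N} \ {i}` of the nearest neighbor of `z_i` in
`S_N = {z_1, …, z_N}` w.r.t. the `L_q` torus metric; ties are broken by taking
the largest such index. -/
noncomputable def nnIndex (q : ℝ≥0∞) {d : ℕ} (α : Fin d → ℝ) (N i : ℕ) : ℕ :=
  sSup {j : ℕ | j ∈ Finset.Icc 1 N ∧ j ≠ i ∧
    ∀ m ∈ Finset.Icc 1 N, m ≠ i → kronDist q α i j ≤ kronDist q α i m}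

/-- `h_i(N) = |j - i|` where `z_j` is the nearest neighbor of `z_i` in `S_N`:
the counting-metric distance of `z_i` to its nearest neighbor. -/
noncomputable def hFun (q : ℝ≥0∞) {d : ℕ} (α : Fin d → ℝ) (N i : ℕ) : ℕ :=
  Nat.dist (nnIndex q α N i) i

/-- `g_N(α, ℤ^d, ‖·‖_q)`: the number of distinct nearest neighbor distances
among `d_q(z_i, nn_1(z_i))`, `i = 1, …, N`. -/
noncomputable def gN (q : ℝ≥0∞) {d : ℕ} (α : Fin d → ℝ) (N : ℕ) : ℕ :=
  ((Finset.Icc 1 N).image (fun i => kronDist q α i (nnIndex q α N i))).card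

/-- The Gauss map `x ↦ {1/x}` generating the continued fraction expansion. -/
noncomputable def gaussMap (x : ℝ) : ℝ := Int.fract x⁻¹

/-- The partial quotients of the continued fraction expansion `[0; a_1, a_2, …]`
of an irrational `α ∈ (0,1)`: `a_n = ⌊1 / G^[n-1](α)⌋` (with `a_0 = 0`). -/
noncomputable def cfA (α : ℝ) : ℕ → ℕ
  | 0 => 0
  | n + 1 => (⌊(gaussMap^[n] α)⁻¹⌋).toNat

/-- The denominators of the convergents of the continued fraction of `α`:
`q_0 = 1`, `q_1 = a_1`, `q_n = a_n q_{n-1} + q_{n-2}`. -/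
noncomputable def cfQ (α : ℝ) : ℕ → ℕ
  | 0 => 1
  | 1 => cfA α 1
  | n + 2 => cfA α (n + 2) * cfQ α (n + 1) + cfQ α n

/-! The Kronecker distance `d_q(z_i, z_j)` depends only on `|i - j|`, so the distances seen from
`z_{1+k}` inside `S_N` are among those seen from `z_1`. Hence if the nearest neighbour `z_j` of
`z_1` in `S_N` satisfies `j + k ≤ N`, the nearest neighbour of `z_{1+k}` is `z_{j+k}`; the
tie-break towards the largest index is preserved because a farther tied neighbour of `z_{1+k}`
would shift back to a farther tied neighbour of `z_1`. The hypothesis `h_1(n+k) = h_1(n)` says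
exactly that the nearest neighbour of `z_1` in `S_{n+k}` already lies in `S_n`. -/

lemma nint_neg (x : ℝ) : nint (-x) = nint x := by
  unfold nint
  rw [abs_sub_round_eq_min, abs_sub_round_eq_min]
  rcases eq_or_ne (Int.fract x) 0 with h | h
  · rw [Int.fract_neg_eq_zero.mpr h, h]
  · rw [Int.fract_neg h]
    simp [min_comm]

lemma nint_sub_mul_congr {x y x' y' : ℝ} (a : ℝ) (h : |x - y| = |x' - y'|) :
    nint (x * a - y * a) = nint (x' * a - y' * a) := by
  rw [← sub_mul, ← sub_mul]
  rcases abs_eq_abs.mp h with h | h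
  · rw [h]
  · rw [h, neg_mul, nint_neg]

lemma lqDist_congr (q : ℝ≥0∞) {d : ℕ} {x y x' y' : Fin d → ℝ}
    (h : ∀ c, nint (x c - y c) = nint (x' c - y' c)) : lqDist q x y = lqDist q x' y' := by
  unfold lqDist
  split_ifs
  · exact iSup_congr h
  · simp only [h]

lemma kronDist_congr (q : ℝ≥0∞) {d : ℕ} (α : Fin d → ℝ) {i j i' j' : ℕ}
    (h : Nat.dist i j = Nat.dist i' j') : kronDist q α i j = kronDist q α i' j' := by
  have habs : |(i : ℝ) - j| = |(i' : ℝ) - j'| := by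
    have : ((i : ℤ) - j = i' - j') ∨ ((i : ℤ) - j = -(i' - j')) := by
      unfold Nat.dist at h
      omega
    rcases this with h' | h'
    · rw [show (i : ℝ) - j = i' - j' by exact_mod_cast h']
    · rw [show (i : ℝ) - j = -(i' - j') by exact_mod_cast h', abs_neg]
  exact lqDist_congr q fun c => nint_sub_mul_congr (α c) habs

/-- `nnIndex q α N i` is by definition the supremum of `{j | IsNearest q α N i j}`. -/
def IsNearest (q : ℝ≥0∞) {d : ℕ} (α : Fin d → ℝ) (N i j : ℕ) : Prop :=
  j ∈ Finset.Icc 1 N ∧ j ≠ i ∧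
    ∀ m ∈ Finset.Icc 1 N, m ≠ i → kronDist q α i j ≤ kronDist q α i m

section NearestNeighbor

variable (q : ℝ≥0∞) {d : ℕ} (α : Fin d → ℝ) {N : ℕ}

lemma nnIndex_eq_of_isGreatest {i j : ℕ} (h : IsGreatest {j | IsNearest q α N i j} j) :
    nnIndex q α N i = j :=
  h.csSup_eq

lemma isGreatest_nnIndex {i : ℕ} (hex : ∃ j ∈ Finset.Icc 1 N, j ≠ i) :
    IsGreatest {j | IsNearest q α N i j} (nnIndex q α N i) := by
  have hne : ((Finset.Icc 1 N).filter (· ≠ i)).Nonempty := by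
    obtain ⟨j, hj, hji⟩ := hex
    exact ⟨j, Finset.mem_filter.mpr ⟨hj, hji⟩⟩
  obtain ⟨j, hj, hjmin⟩ := Finset.exists_min_image _ (kronDist q α i) hne
  rw [Finset.mem_filter] at hj
  have hnearest : IsNearest q α N i j :=
    ⟨hj.1, hj.2, fun m hm hmi => hjmin m (Finset.mem_filter.mpr ⟨hm, hmi⟩)⟩
  have hbdd : BddAbove {j | IsNearest q α N i j} :=
    ⟨N, fun _ hx => (Finset.mem_Icc.mp hx.1).2⟩
  exact ⟨Nat.sSup_mem ⟨j, hnearest⟩ hbdd, fun _ hx => le_csSup hbdd hx⟩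

lemma isGreatest_nnIndex_one (hN : 2 ≤ N) :
    IsGreatest {j | IsNearest q α N 1 j} (nnIndex q α N 1) :=
  isGreatest_nnIndex q α ⟨2, Finset.mem_Icc.mpr ⟨by omega, hN⟩, by omega⟩

lemma nnIndex_one_mem_Icc (hN : 2 ≤ N) : nnIndex q α N 1 ∈ Finset.Icc 2 N := by
  obtain ⟨hmem, hne, -⟩ := (isGreatest_nnIndex_one q α hN).1
  rw [Finset.mem_Icc] at hmem ⊢
  omega

theorem nnIndex_one_add (hN : 2 ≤ N) {k : ℕ} (hk : nnIndex q α N 1 + k ≤ N) :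
    nnIndex q α N (1 + k) = nnIndex q α N 1 + k := by
  set j := nnIndex q α N 1
  obtain ⟨⟨hjmem, hj1, hjmin⟩, hjmax⟩ := isGreatest_nnIndex_one q α hN
  rw [Finset.mem_Icc] at hjmem
  have hshift : kronDist q α (1 + k) (j + k) = kronDist q α 1 j := kronDist_congr q α (by
    unfold Nat.dist; omega)
  refine nnIndex_eq_of_isGreatest q α ⟨⟨Finset.mem_Icc.mpr ⟨by omega, hk⟩, by omega, ?_⟩, ?_⟩
  · intro m hm hmk
    rw [Finset.mem_Icc] at hm
    -- `z_m` is as far from `z_{1+k}` as `z_{1 + |m - (1+k)|}` is from `z_1`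
    calc kronDist q α (1 + k) (j + k) = kronDist q α 1 j := hshift
      _ ≤ kronDist q α 1 (1 + Nat.dist m (1 + k)) := by
          apply hjmin
          · rw [Finset.mem_Icc]; unfold Nat.dist; omega
          · unfold Nat.dist; omega
      _ = kronDist q α (1 + k) m := kronDist_congr q α (by unfold Nat.dist; omega)
  · rintro j' ⟨hj'mem, hj'k, hj'min⟩
    rw [Finset.mem_Icc] at hj'mem
    by_contra! hfar
    have hback : kronDist q α 1 (j' - k) = kronDist q α (1 + k) j' :=
      kronDist_congr q α (by unfold Nat.dist; omega)
    have hnearer : kronDist q α (1 + k) j' ≤ kronDist q α 1 j :=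
      hshift ▸ hj'min (j + k) (Finset.mem_Icc.mpr ⟨by omega, hk⟩) (by omega)
    have : j' - k ≤ j := hjmax ⟨Finset.mem_Icc.mpr ⟨by omega, by omega⟩, by omega,
      fun m hm hm1 => hback ▸ hnearer.trans (hjmin m hm hm1)⟩
    omega

end NearestNeighbor

theorem statement0_general (d : ℕ) (α : Fin d → ℝ) (q : ℝ≥0∞)
    (n k : ℕ) (hn : 2 ≤ n)
    (h : hFun q α (n + k) 1 = hFun q α n 1) :
    hFun q α (n + k) (1 + k) = hFun q α n 1 := by
  have hn1 := Finset.mem_Icc.mp (nnIndex_one_mem_Icc q α hn)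
  have hnk1 := Finset.mem_Icc.mp (nnIndex_one_mem_Icc q α (N := n + k) (by omega))
  have hsame : nnIndex q α (n + k) 1 = nnIndex q α n 1 := by
    unfold hFun Nat.dist at h
    omega
  rw [← h]
  unfold hFun
  rw [nnIndex_one_add q α (by omega) (by omega)]
  unfold Nat.dist
  omega

/-- For `α ∈ ℝ^d` (d ≥ 1) with at least one irrational coordinate and
`1 ≤ q ≤ ∞`: for all `n ≥ 2`, `k ≥ 1` with `h_1(n+k) = h_1(n)` one has
`h_{1+k}(n+k) = h_1(n)`. -/
theorem statement0 (d : ℕ) (hd : 1 ≤ d) (α : Fin d → ℝ)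
    (hirr : ∃ i, Irrational (α i)) (q : ℝ≥0∞) (hq : 1 ≤ q)
    (n k : ℕ) (hn : 2 ≤ n) (hk : 1 ≤ k)
    (h : hFun q α (n + k) 1 = hFun q α n 1) :
    hFun q α (n + k) (1 + k) = hFun q α n 1 :=
  statement0_general d α q n k hn h
end

section
/- Let α ∈ (0,1) be irrational with continued fraction expansion [0; a_1, a_2, …] and convergent denominators (q_n)_{n≥0}. Let k, k' be indices with k + 2 ≤ k' and k' ≥ 3. Set b := gcd(q_k, q_{k'−2}), c := q_k / b, d := gcd(c, q_{k'−3}), and e := c / d. If gcd(d, a_{k'−1}) = 1 and e divides a_{k'−1}, then gcd(q_{k'−1}, q_k) = 1. -/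
/-!
Write `q_k = b d e`. Expanding `q_{k'-1} = a_{k'-1} q_{k'-2} + q_{k'-3}` modulo each factor:
it is coprime to `b ∣ q_{k'-2}` because consecutive denominators are coprime, to `d ∣ q_{k'-3}`
because `d` is coprime to both `a_{k'-1}` and `q_{k'-2}`, and to `e ∣ a_{k'-1}` because `e` is
coprime to `q_{k'-3}`.
-/

open scoped BigOperators ENNReal NNReal

theorem coprime_cfQ_succ_cfQ (α : ℝ) (n : ℕ) : Nat.Coprime (cfQ α (n + 1)) (cfQ α n) := by
  induction n with
  | zero => simp [cfQ]
  | succ n ih => exact (Nat.coprime_mul_right_add_left _ _ _).2 ih.symm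

namespace Nat

/-- Any common factor of `c / gcd c q` and `q` divides both `gcd c q` and `a`. -/
theorem coprime_div_gcd_of_coprime_gcd {a c q : ℕ} (hda : Coprime (gcd c q) a)
    (hea : c / gcd c q ∣ a) : Coprime (c / gcd c q) q := by
  have hdvd_c : c / gcd c q ∣ c := div_dvd_of_dvd (gcd_dvd_left c q)
  have hdvd : gcd (c / gcd c q) q ∣ gcd (gcd c q) a :=
    dvd_gcd (dvd_gcd ((gcd_dvd_left _ _).trans hdvd_c) (gcd_dvd_right _ _))
      ((gcd_dvd_left _ _).trans hea)
  exact eq_one_of_dvd_one (hda ▸ hdvd)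

theorem coprime_mul_add_mul_mul {a q₀ q₁ b d e : ℕ} (hq : Coprime q₁ q₀) (hb : b ∣ q₁)
    (hd : d ∣ q₀) (hda : Coprime d a) (hea : e ∣ a) (heq : Coprime e q₀) :
    Coprime (a * q₁ + q₀) (b * (d * e)) := by
  have hcop_b : Coprime (a * q₁ + q₀) b :=
    ((coprime_mul_right_add_left q₀ q₁ a).2 hq.symm).coprime_dvd_right hb
  have hcop_d : Coprime (a * q₁ + q₀) d := by
    obtain ⟨t, rfl⟩ := hd
    exact (coprime_add_mul_left_left _ d t).2
      (hda.symm.mul_left (hq.coprime_dvd_right (dvd_mul_right d t)))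
  have hcop_e : Coprime (a * q₁ + q₀) e := by
    obtain ⟨s, rfl⟩ := hea
    rw [mul_assoc]
    exact (coprime_mul_left_add_left q₀ e _).2 heq.symm
  exact hcop_b.mul_right (hcop_d.mul_right hcop_e)

end Nat

theorem statement7_general (α : ℝ)
    (k k' : ℕ) (hk3 : 3 ≤ k')
    (b c d e : ℕ)
    (hb : b = Nat.gcd (cfQ α k) (cfQ α (k' - 2)))
    (hc : c = cfQ α k / b)
    (hd : d = Nat.gcd c (cfQ α (k' - 3)))
    (he : e = c / d)
    (h1 : Nat.gcd d (cfA α (k' - 1)) = 1)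
    (h2 : e ∣ cfA α (k' - 1)) :
    Nat.gcd (cfQ α (k' - 1)) (cfQ α k) = 1 := by
  obtain ⟨m, rfl⟩ : ∃ m, k' = m + 3 := ⟨k' - 3, by omega⟩
  have hqk : cfQ α k = b * c := by rw [hc, Nat.mul_div_cancel' (hb ▸ Nat.gcd_dvd_left _ _)]
  have hcde : c = d * e := by rw [he, Nat.mul_div_cancel' (hd ▸ Nat.gcd_dvd_left _ _)]
  subst hd he
  rw [hqk, hcde]
  exact Nat.coprime_mul_add_mul_mul (coprime_cfQ_succ_cfQ α m) (hb ▸ Nat.gcd_dvd_right _ _)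
    (Nat.gcd_dvd_right _ _) h1 h2 (Nat.coprime_div_gcd_of_coprime_gcd h1 h2)

/-- For irrational `α ∈ (0,1)` with partial quotients `(a_i)` and convergent
denominators `(q_n)`, indices `k + 2 ≤ k'`, `k' ≥ 3`; with `b = gcd(q_k, q_{k'-2})`,
`c = q_k / b`, `d = gcd(c, q_{k'-3})`, `e = c / d`: if `gcd(d, a_{k'-1}) = 1` and
`e ∣ a_{k'-1}`, then `gcd(q_{k'-1}, q_k) = 1`. -/
theorem statement7 (α : ℝ) (hmem : α ∈ Set.Ioo (0 : ℝ) 1) (hirr : Irrational α)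
    (k k' : ℕ) (hkk' : k + 2 ≤ k') (hk3 : 3 ≤ k')
    (b c d e : ℕ)
    (hb : b = Nat.gcd (cfQ α k) (cfQ α (k' - 2)))
    (hc : c = cfQ α k / b)
    (hd : d = Nat.gcd c (cfQ α (k' - 3)))
    (he : e = c / d)
    (h1 : Nat.gcd d (cfA α (k' - 1)) = 1)
    (h2 : e ∣ cfA α (k' - 1)) :
    Nat.gcd (cfQ α (k' - 1)) (cfQ α k) = 1 :=
  statement7_general α k k' hk3 b c d e hb hc hd he h1 h2
end

section
/- Let α ∈ (0,1) be irrational with continued fraction expansion [0; a_1, a_2, …] and convergent denominators (q_n)_{n≥0}, and fix i ≥ 1. Then for every integer n with q_i ≤ n ≤ q_{i+1} that is not of the form n = m q_i for some 1 ≤ m ≤ a_{i+1}, nor of the form n = q_{i+1} − m q_i for some 0 ≤ m ≤ a_{i+1} − 1, one has ‖n α‖ > ‖a_{i+1} q_i α‖. In other words, among the points {n α} with q_i ≤ n ≤ q_{i+1}, the 2a_{i+1} points closest to the origin in the torus norm are exactly those with n ∈ {q_{i+1}} ∪ {m q_i : 1 ≤ m ≤ a_{i+1}} ∪ {q_{i+1}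 − m q_i : 1 ≤ m ≤ a_{i+1} − 1}. -/
open scoped BigOperators ENNReal NNReal

/-!
Write `θ_k` for the `k`-th iterate of the Gauss map at `α`, `p_k` for the numerators of the
convergents and `η_k = θ_0 ⋯ θ_k`, so that `q_k α - p_k = (-1)^k η_k`. Since
`p_{i+1} q_i - p_i q_{i+1} = ±1`, the vectors `(q_i, p_i)` and `(q_{i+1}, p_{i+1})` form a basis
of `ℤ²`: for `p` the integer nearest to `n α` we get `(n, p) = x (q_i, p_i) + y (q_{i+1}, p_{i+1})`
and `|n α - p| = |x η_i - y η_{i+1}|`. If this is at most `a_{i+1} η_i ≥ ‖a_{i+1} q_i α‖`, the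
constraint `q_i ≤ n ≤ q_{i+1}` leaves only `y = 0, 1 ≤ x ≤ a_{i+1}` and `y = 1, 0 ≤ -x < a_{i+1}`.
-/

open Finset Set

lemma irrational_gaussMap {x : ℝ} (hx : Irrational x) : Irrational (gaussMap x) :=
  hx.inv.sub_intCast _

lemma gaussMap_mem_Ioo {x : ℝ} (hx : Irrational x) : gaussMap x ∈ Ioo (0 : ℝ) 1 :=
  ⟨(Int.fract_nonneg _).lt_of_ne' fun h =>
    (irrational_gaussMap hx).ne_int 0 (by simpa [gaussMap] using h), Int.fract_lt_one _⟩

lemma floor_inv_mul_add_mul_gaussMap {x : ℝ} (hx : x ≠ 0) :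
    (⌊x⁻¹⌋ : ℝ) * x + x * gaussMap x = 1 := by
  rw [gaussMap]
  linear_combination x * Int.floor_add_fract x⁻¹ + mul_inv_cancel₀ hx

lemma one_le_floor_inv {x : ℝ} (hx : x ∈ Ioo (0 : ℝ) 1) : 1 ≤ ⌊x⁻¹⌋ :=
  Int.le_floor.mpr (by exact_mod_cast (one_lt_inv₀ hx.1).mpr hx.2 |>.le)

lemma exists_mul_add_mul_eq_of_isUnit {Q Q' P P' : ℤ} (hdet : IsUnit (P' * Q - P * Q'))
    (n p : ℤ) : ∃ x y : ℤ, x * Q + y * Q' = n ∧ x * P + y * P' = p := by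
  set d := P' * Q - P * Q'
  have hd : d * d = 1 := Int.isUnit_mul_self hdet
  exact ⟨d * (n * P' - p * Q'), d * (p * Q - n * P),
    by linear_combination n * hd, by linear_combination p * hd⟩

lemma eq_zero_or_eq_one_of_abs_mul_sub_mul_le {Q Q' n x y a : ℤ} {E F : ℝ} (hE : 0 < E)
    (hF : 0 < F) (hQ : 0 < Q) (haQ : a * Q ≤ Q') (hn : x * Q + y * Q' = n) (hn1 : Q ≤ n)
    (hn2 : n ≤ Q') (h : |x * E - y * F| ≤ a * E) :
    (y = 0 ∧ 1 ≤ x ∧ x ≤ a) ∨ (y = 1 ∧ x ≤ 0 ∧ -x < a) := by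
  -- `y ≤ -1` forces `x > a` and `y ≥ 2` forces `x ≤ -a`; either way `|x E - y F| > a E`.
  rcases (by omega : y ≤ -1 ∨ y = 0 ∨ y = 1 ∨ 2 ≤ y) with hy | rfl | rfl | hy
  · have hx : a + 1 ≤ x := le_of_mul_le_mul_right (by nlinarith) hQ
    have hxR : (a : ℝ) + 1 ≤ x := by exact_mod_cast hx
    have hyR : (y : ℝ) ≤ -1 := by exact_mod_cast hy
    nlinarith [le_abs_self ((x : ℝ) * E - y * F)]
  · have hx1 : 1 ≤ x := le_of_mul_le_mul_right (by linarith) hQ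
    have hx1R : (1 : ℝ) ≤ x := by exact_mod_cast hx1
    rw [Int.cast_zero, zero_mul, sub_zero, abs_mul, abs_of_pos hE,
      abs_of_pos (by linarith)] at h
    exact Or.inl ⟨rfl, hx1, by exact_mod_cast le_of_mul_le_mul_right h hE⟩
  · have hx0 : x ≤ 0 := nonpos_of_mul_nonpos_left (by linarith) hQ
    have hx0R : (x : ℝ) ≤ 0 := by exact_mod_cast hx0
    rw [Int.cast_one, one_mul] at h
    have hxa : -(x : ℝ) < a := by nlinarith [neg_abs_le ((x : ℝ) * E - F)]
    exact Or.inr ⟨rfl, hx0, by exact_mod_cast hxa⟩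
  · have hx : x ≤ -a := le_of_mul_le_mul_right (by nlinarith) hQ
    have hxR : (x : ℝ) ≤ -a := by exact_mod_cast hx
    have hyR : (2 : ℝ) ≤ y := by exact_mod_cast hy
    nlinarith [neg_abs_le ((x : ℝ) * E - y * F)]

section ContinuedFraction

variable {α : ℝ} (hmem : α ∈ Ioo (0 : ℝ) 1) (hirr : Irrational α)

noncomputable def cfP (α : ℝ) : ℕ → ℤ
  | 0 => 0
  | 1 => 1
  | n + 2 => cfA α (n + 2) * cfP α (n + 1) + cfP α n

noncomputable def cfEta (α : ℝ) (k : ℕ) : ℝ := ∏ j ∈ range (k + 1), gaussMap^[j] α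

include hirr in
lemma irrational_gaussMap_iterate (k : ℕ) : Irrational (gaussMap^[k] α) := by
  induction k with
  | zero => exact hirr
  | succ k ih => rw [Function.iterate_succ_apply']; exact irrational_gaussMap ih

include hmem hirr in
lemma gaussMap_iterate_mem_Ioo : ∀ k, gaussMap^[k] α ∈ Ioo (0 : ℝ) 1
  | 0 => hmem
  | k + 1 => by
    rw [Function.iterate_succ_apply']; exact gaussMap_mem_Ioo (irrational_gaussMap_iterate hirr k)

include hmem hirr in
lemma cast_cfA_succ (k : ℕ) : (cfA α (k + 1) : ℝ) = ⌊(gaussMap^[k] α)⁻¹⌋ := by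
  have := one_le_floor_inv (gaussMap_iterate_mem_Ioo hmem hirr k)
  rw [cfA, ← Int.cast_natCast, Int.toNat_of_nonneg (by omega)]

include hmem hirr in
lemma one_le_cfA_succ (k : ℕ) : 1 ≤ cfA α (k + 1) := by
  have := one_le_floor_inv (gaussMap_iterate_mem_Ioo hmem hirr k)
  rw [cfA]; omega

include hmem hirr in
lemma cfA_succ_mul_add_mul (k : ℕ) :
    (cfA α (k + 1) : ℝ) * gaussMap^[k] α + gaussMap^[k] α * gaussMap^[k + 1] α = 1 := by
  rw [cast_cfA_succ hmem hirr, Function.iterate_succ_apply']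
  exact floor_inv_mul_add_mul_gaussMap (gaussMap_iterate_mem_Ioo hmem hirr k).1.ne'

include hmem hirr in
lemma one_le_cfQ : ∀ k, 1 ≤ cfQ α k
  | 0 => le_rfl
  | 1 => one_le_cfA_succ hmem hirr 0
  | k + 2 => by
    have := one_le_cfQ k
    rw [cfQ]; omega

lemma cfA_succ_mul_cfQ_le (k : ℕ) : cfA α (k + 1) * cfQ α k ≤ cfQ α (k + 1) := by
  cases k with
  | zero => simp [cfQ]
  | succ k => exact Nat.le_add_right _ _

include hmem hirr in
lemma cfEta_pos (k : ℕ) : 0 < cfEta α k :=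
  prod_pos fun j _ => (gaussMap_iterate_mem_Ioo hmem hirr j).1

lemma cfEta_succ (k : ℕ) : cfEta α (k + 1) = cfEta α k * gaussMap^[k + 1] α :=
  prod_range_succ _ _

lemma cfP_succ_mul_cfQ_sub : ∀ k,
    cfP α (k + 1) * cfQ α k - cfP α k * cfQ α (k + 1) = (-1 : ℤ) ^ k
  | 0 => by simp [cfP, cfQ]
  | k + 1 => by
    have ih := cfP_succ_mul_cfQ_sub k
    simp only [cfP, cfQ, Nat.cast_add, Nat.cast_mul]
    linear_combination -ih

include hmem hirr in
lemma cfQ_mul_sub_cfP : ∀ k, cfQ α k * α - cfP α k = (-1) ^ k * cfEta α k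
  | 0 => by simp [cfQ, cfP, cfEta]
  | 1 => by
    have ha := cfA_succ_mul_add_mul hmem hirr 0
    rw [Function.iterate_zero_apply] at ha
    have hη : cfEta α 1 = α * gaussMap^[1] α := by simp [cfEta, prod_range_succ]
    simp only [cfQ, cfP, hη]
    push_cast
    linear_combination ha
  | k + 2 => by
    have h0 := cfQ_mul_sub_cfP k
    have h1 := cfQ_mul_sub_cfP (k + 1)
    have ha := cfA_succ_mul_add_mul hmem hirr (k + 1)
    rw [cfEta_succ] at h1
    simp only [cfQ, cfP, cfEta_succ, Nat.cast_add, Nat.cast_mul, Int.cast_add, Int.cast_mul,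
      Int.cast_natCast]
    linear_combination (cfA α (k + 2) : ℝ) * h1 + h0 - (-1) ^ k * cfEta α k * ha

include hmem hirr in
lemma nint_mul_cfQ_mul_le_mul_cfEta (m k : ℕ) :
    nint (((m * cfQ α k : ℕ) : ℝ) * α) ≤ m * cfEta α k := by
  calc nint (((m * cfQ α k : ℕ) : ℝ) * α)
      ≤ |((m * cfQ α k : ℕ) : ℝ) * α - ((m * cfP α k : ℤ) : ℝ)| := round_le _ _
    _ = m * cfEta α k := by
      rw [show ((m * cfQ α k : ℕ) : ℝ) * α - ((m * cfP α k : ℤ) : ℝ)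
          = m * (cfQ α k * α - cfP α k) by push_cast; ring,
        cfQ_mul_sub_cfP hmem hirr, abs_mul, abs_mul, abs_pow, abs_neg, abs_one, one_pow,
        one_mul, Nat.abs_cast, abs_of_pos (cfEta_pos hmem hirr k)]

include hmem hirr in
lemma nint_eq_abs_mul_cfEta_sub_mul_cfEta (i n : ℕ) {x y : ℤ}
    (hq : x * cfQ α i + y * cfQ α (i + 1) = n)
    (hp : x * cfP α i + y * cfP α (i + 1) = round ((n : ℝ) * α)) :
    nint ((n : ℝ) * α) = |x * cfEta α i - y * cfEta α (i + 1)| := by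
  have hqR : (x : ℝ) * cfQ α i + y * cfQ α (i + 1) = n := by exact_mod_cast hq
  have hpR : (x : ℝ) * cfP α i + y * cfP α (i + 1) = round ((n : ℝ) * α) := by exact_mod_cast hp
  have key : (n : ℝ) * α - round ((n : ℝ) * α)
      = (-1) ^ i * (x * cfEta α i - y * cfEta α (i + 1)) := by
    rw [← hpR]
    linear_combination (-α) * hqR + x * cfQ_mul_sub_cfP hmem hirr i
      + y * cfQ_mul_sub_cfP hmem hirr (i + 1)
  rw [nint, key, abs_mul, abs_pow, abs_neg, abs_one, one_pow, one_mul]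

include hmem hirr in
lemma exists_eq_mul_cfQ_or_eq_cfQ_sub_mul_of_nint_le (i n : ℕ) (hn1 : cfQ α i ≤ n)
    (hn2 : n ≤ cfQ α (i + 1)) (h : nint ((n : ℝ) * α) ≤ cfA α (i + 1) * cfEta α i) :
    (∃ m : ℕ, 1 ≤ m ∧ m ≤ cfA α (i + 1) ∧ n = m * cfQ α i) ∨
      ∃ m : ℕ, m ≤ cfA α (i + 1) - 1 ∧ n = cfQ α (i + 1) - m * cfQ α i := by
  have hdet : IsUnit (cfP α (i + 1) * cfQ α i - cfP α i * cfQ α (i + 1)) := by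
    rw [cfP_succ_mul_cfQ_sub]; exact isUnit_neg_one.pow i
  obtain ⟨x, y, hq, hp⟩ := exists_mul_add_mul_eq_of_isUnit hdet n (round ((n : ℝ) * α))
  rw [nint_eq_abs_mul_cfEta_sub_mul_cfEta hmem hirr i n hq hp] at h
  have hQ : (0 : ℤ) < cfQ α i := by exact_mod_cast one_le_cfQ hmem hirr i
  have haQ : (cfA α (i + 1) * cfQ α i : ℤ) ≤ cfQ α (i + 1) := by
    exact_mod_cast cfA_succ_mul_cfQ_le i
  rcases eq_zero_or_eq_one_of_abs_mul_sub_mul_le (cfEta_pos hmem hirr i)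
      (cfEta_pos hmem hirr (i + 1)) hQ haQ hq (by exact_mod_cast hn1) (by exact_mod_cast hn2)
      (by exact_mod_cast h) with ⟨rfl, hx1, hxa⟩ | ⟨rfl, hx0, hxa⟩
  · lift x to ℕ using by omega
    refine Or.inl ⟨x, by omega, by omega, ?_⟩
    rw [zero_mul, add_zero] at hq
    exact_mod_cast hq.symm
  · obtain ⟨m, rfl⟩ : ∃ m : ℕ, x = -m := ⟨x.natAbs, by omega⟩
    have hsum : n + m * cfQ α i = cfQ α (i + 1) := by
      have : (n + m * cfQ α i : ℤ) = cfQ α (i + 1) := by linarith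
      exact_mod_cast this
    exact Or.inr ⟨m, by omega, by omega⟩

end ContinuedFraction

theorem statement11_general (α : ℝ) (hmem : α ∈ Set.Ioo (0 : ℝ) 1) (hirr : Irrational α)
    (i : ℕ) (n : ℕ)
    (hn1 : cfQ α i ≤ n) (hn2 : n ≤ cfQ α (i + 1))
    (h1 : ¬ ∃ m : ℕ, 1 ≤ m ∧ m ≤ cfA α (i + 1) ∧ n = m * cfQ α i)
    (h2 : ¬ ∃ m : ℕ, m ≤ cfA α (i + 1) - 1 ∧ n = cfQ α (i + 1) - m * cfQ α i) :
    nint (((cfA α (i + 1) * cfQ α i : ℕ) : ℝ) * α) < nint ((n : ℝ) * α) := by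
  by_contra! h
  have hn := h.trans (nint_mul_cfQ_mul_le_mul_cfEta hmem hirr (cfA α (i + 1)) i)
  rcases exists_eq_mul_cfQ_or_eq_cfQ_sub_mul_of_nint_le hmem hirr i n hn1 hn2 hn with h | h
  exacts [h1 h, h2 h]

/-- For irrational `α ∈ (0,1)` with partial quotients `(a_i)` and convergent
denominators `(q_n)`, `i ≥ 1`: every integer `n` with `q_i ≤ n ≤ q_{i+1}` which is not of
the form `m q_i` with `1 ≤ m ≤ a_{i+1}` nor of the form `q_{i+1} - m q_i` with
`0 ≤ m ≤ a_{i+1} - 1` satisfies `‖nα‖ > ‖a_{i+1} q_i α‖`. -/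
theorem statement11 (α : ℝ) (hmem : α ∈ Set.Ioo (0 : ℝ) 1) (hirr : Irrational α)
    (i : ℕ) (hi : 1 ≤ i) (n : ℕ)
    (hn1 : cfQ α i ≤ n) (hn2 : n ≤ cfQ α (i + 1))
    (h1 : ¬ ∃ m : ℕ, 1 ≤ m ∧ m ≤ cfA α (i + 1) ∧ n = m * cfQ α i)
    (h2 : ¬ ∃ m : ℕ, m ≤ cfA α (i + 1) - 1 ∧ n = cfQ α (i + 1) - m * cfQ α i) :
    nint (((cfA α (i + 1) * cfQ α i : ℕ) : ℝ) * α) < nint ((n : ℝ) * α) :=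
  statement11_general α hmem hirr i n hn1 hn2 h1 h2
end
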